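/- Let g ∈ L¹(ℝ) (complex-valued) and let f(x) = ∫_ℝ e^{ixy} g(y) dy, so f ∈ W₀(ℝ). Let ℓ_f : ℝ → ℂ be the piecewise linear continuous function interpolating f at the integers: ℓ_f(x) = (1 − (x − ⌊x⌋)) f(⌊x⌋) + (x − ⌊x⌋) f(⌊x⌋ + 1). Then there exists h ∈ L¹(ℝ) such that ℓ_f(x) = ∫_ℝ e^{ixy} h(y) dy for all x ∈ ℝ, and ‖h‖_{L¹} ≤ ‖g‖_{L¹}; that is, ℓ_f ∈ W₀(ℝ) with ‖ℓ_f‖_{W₀} ≤ ‖f‖_{W₀}. -/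

import Mathlib

/-!
For a single character the statement is an identity: the zigzag of `x ↦ exp (i x u)` is
`∑ₖ Φ(u - 2πk) exp (i x (u - 2πk))`, where `Φ(y) = (sin (y/2) / (y/2))²` (`fejer`) is the
Fourier transform of the hat function `max (1 - |t|) 0`. Indeed `exp (-i x u)` times this zigzag
is a continuous 1-periodic function of `x` whose Fourier coefficients are the nonnegative,
summable numbers `Φ(u + 2πn)`; evaluating at `x = 0` shows that they sum to `1`.
Integrating against `g` and unfolding the sum over `k` by translation invariance gives
`ℓ_f(x) = ∫ exp (i x y) h(y) dy` with `h(y) = Φ(y) ∑ₖ g(y + 2πk)`, and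
`‖h‖₁ ≤ ∫ |g(u)| ∑ₖ Φ(u - 2πk) du = ‖g‖₁`.
-/

open MeasureTheory Real Filter Complex
open scoped ENNReal

noncomputable def zigzag (f : ℝ → ℂ) (x : ℝ) : ℂ :=
  (1 - ((Int.fract x : ℝ) : ℂ)) * f (⌊x⌋ : ℝ) + ((Int.fract x : ℝ) : ℂ) * f ((⌊x⌋ : ℝ) + 1)

lemma zigzag_integral {α : Type*} [MeasurableSpace α] {μ : Measure α} {F : ℝ → α → ℂ}
    (hF : ∀ x, Integrable (F x) μ) (x : ℝ) :
    zigzag (fun x => ∫ y, F x y ∂μ) x = ∫ y, zigzag (fun x => F x y) x ∂μ := by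
  simp only [zigzag]
  rw [integral_add ((hF _).const_mul _) ((hF _).const_mul _), integral_const_mul,
    integral_const_mul]

lemma zigzag_mul_const (f : ℝ → ℂ) (c : ℂ) (x : ℝ) :
    zigzag (fun x => f x * c) x = zigzag f x * c := by
  simp only [zigzag]
  ring

noncomputable def fejer (y : ℝ) : ℝ := sinc (y / 2) ^ 2

lemma fejer_nonneg (y : ℝ) : 0 ≤ fejer y := sq_nonneg _

lemma fejer_le_four_div_sq {y : ℝ} (hy : y ≠ 0) : fejer y ≤ 4 / y ^ 2 := by
  rw [fejer, sinc_of_ne_zero (div_ne_zero hy two_ne_zero), div_pow,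
    div_le_div_iff₀ (by positivity) (by positivity)]
  nlinarith [sin_sq_le_one (y / 2)]

lemma fejer_eq_div {y : ℝ} (hy : y ≠ 0) :
    (fejer y : ℂ) = (2 - exp (y * I) - exp (-y * I)) / (y : ℂ) ^ 2 := by
  have : fejer y = (2 - 2 * Real.cos y) / y ^ 2 := by
    rw [fejer, sinc_of_ne_zero (div_ne_zero hy two_ne_zero), div_pow, Real.sin_sq_eq_half_sub,
      mul_div_cancel₀ _ two_ne_zero]
    field_simp
  rw [this]
  push_cast
  rw [Complex.two_cos]
  ring

lemma integral_exp_mul_chord (a : ℝ) :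
    ∫ x in (0:ℝ)..1, exp (-(I * a * x)) * ((1 - x) + x * exp (I * a)) = fejer a := by
  rcases eq_or_ne a 0 with rfl | ha
  · simp [fejer]
  set E := exp (I * a)
  have hE : exp (-(I * a)) * E = 1 := by rw [← Complex.exp_add]; simp
  have ha' : (a : ℂ) ≠ 0 := ofReal_ne_zero.mpr ha
  set β : ℂ := I * (E - 1) / a
  set α : ℂ := -I * (β - 1) / a
  have hderiv (x : ℝ) : HasDerivAt (fun x : ℝ => exp (-(I * a * x)) * (α + β * x))
      (exp (-(I * a * x)) * ((1 - x) + x * E)) x := by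
    have := (((hasDerivAt_id (x : ℂ)).const_mul (-(I * a))).cexp.mul
      (((hasDerivAt_id (x : ℂ)).const_mul β).const_add α)).comp_ofReal
    have hcoef : -(I * a) * (α + β * x) + β = (1 - x) + x * E := by
      simp only [α, β]
      field_simp
      ring_nf
      simp only [I_sq, I_pow_three]
      ring
    convert this using 1
    · ext y; simp [neg_mul]
    · simp only [id, mul_one, neg_mul]
      linear_combination (-exp (-(I * a * x))) * hcoef
  rw [intervalIntegral.integral_eq_sub_of_hasDerivAt (fun x _ => hderiv x)
    (by apply Continuous.intervalIntegrable; fun_prop), fejer_eq_div ha]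
  simp only [α, β, ofReal_one, ofReal_zero, mul_one, mul_zero, neg_zero, Complex.exp_zero,
    one_mul, add_zero]
  rw [show (a : ℂ) * I = I * a by ring, show -(a : ℂ) * I = -(I * a) by ring]
  field_simp
  ring_nf
  simp only [I_sq]
  linear_combination (1 + I * a) * hE

noncomputable def expChord (u t : ℝ) : ℂ := exp (-(I * u * t)) * ((1 - t) + t * exp (I * u))

lemma zigzag_exp (u x : ℝ) :
    zigzag (fun x => exp (I * x * u)) x = exp (I * x * u) * expChord u (Int.fract x) := by
  have hx : (x : ℂ) = (⌊x⌋ : ℝ) + (Int.fract x : ℝ) := by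
    rw [← ofReal_add, Int.floor_add_fract]
  rw [zigzag, expChord, hx, ← mul_assoc, ← Complex.exp_add]
  push_cast
  rw [show I * (⌊x⌋ + 1) * u = I * ⌊x⌋ * u + I * u by ring, Complex.exp_add,
    show I * (⌊x⌋ + Int.fract x) * u + -(I * u * Int.fract x) = I * ⌊x⌋ * u by ring]
  ring

lemma fourierCoeffOn_expChord (u : ℝ) (n : ℤ) :
    fourierCoeffOn zero_lt_one (expChord u) n = fejer (u + 2 * π * n) := by
  rw [fourierCoeffOn_eq_integral, ← integral_exp_mul_chord, sub_zero, div_one, one_smul]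
  refine intervalIntegral.integral_congr fun x _ => ?_
  have hperiod : exp (I * (u + 2 * π * n : ℝ)) = exp (I * u) := by
    rw [show I * (u + 2 * π * n : ℝ) = I * u + n * (2 * π * I) by push_cast; ring,
      Complex.exp_add, Complex.exp_int_mul_two_pi_mul_I, mul_one]
  rw [fourier_coe_apply, expChord, smul_eq_mul, hperiod, ← mul_assoc, ← Complex.exp_add]
  push_cast
  ring_nf

lemma summable_fejer_add_mul_int (u : ℝ) {p : ℝ} (hp : p ≠ 0) :
    Summable fun n : ℤ => fejer (u + p * n) := by
  have hsum := ((Real.summable_one_div_int_add_rpow (u / p) 2).mpr one_lt_two).mul_left (4 / p ^ 2)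
  refine hsum.of_norm_bounded_eventually ?_
  have hfin : {n : ℤ | (n : ℝ) + u / p = 0}.Finite := by
    refine Set.Subsingleton.finite fun m hm n hn => ?_
    exact_mod_cast (add_left_injective (u / p)) (hm.trans hn.symm)
  filter_upwards [hfin.compl_mem_cofinite] with n hn
  have hn : (n : ℝ) + u / p ≠ 0 := hn
  have hshift : u + p * n = p * (n + u / p) := by field_simp; ring
  rw [Real.norm_of_nonneg (fejer_nonneg _), hshift, Real.rpow_two, sq_abs]
  refine (fejer_le_four_div_sq (mul_ne_zero hp hn)).trans_eq ?_
  rw [mul_pow]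
  field_simp

lemma hasSum_exp_mul_fejer (u x : ℝ) :
    HasSum (fun k : ℤ => exp (I * x * (u - 2 * π * k : ℝ)) * fejer (u - 2 * π * k))
      (zigzag (fun x => exp (I * x * u)) x) := by
  have : Fact ((0:ℝ) < 1) := ⟨one_pos⟩
  have hclosed : expChord u 0 = expChord u (0 + 1) := by
    simp [expChord, ← Complex.exp_add]
  let F : C(AddCircle (1:ℝ), ℂ) := ⟨AddCircle.liftIco 1 0 (expChord u),
    AddCircle.liftIco_continuous hclosed (by unfold expChord; fun_prop)⟩
  have hcoeff (n : ℤ) : fourierCoeff F n = fejer (u + 2 * π * n) := by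
    rw [← fourierCoeffOn_expChord]
    exact (fourierCoeff_liftIco_eq _ _).trans (by congr 1; simp)
  have hF : F x = expChord u (Int.fract x) := by
    rw [← AddCircle.coe_fract]
    exact AddCircle.liftIco_coe_apply (f := expChord u)
      ⟨Int.fract_nonneg x, by simpa using Int.fract_lt_one x⟩
  have hsum := has_pointwise_sum_fourier_series_of_summable (f := F)
    (by simpa [funext hcoeff] using summable_fejer_add_mul_int u two_pi_pos.ne')
    (x : AddCircle (1:ℝ))
  rw [hF, ← (Equiv.neg ℤ).hasSum_iff] at hsum
  rw [zigzag_exp]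
  refine (hsum.mul_left (exp (I * x * u))).congr_fun fun k => ?_
  simp only [Function.comp_apply, Equiv.neg_apply, hcoeff, fourier_coe_apply, smul_eq_mul]
  rw [show u + 2 * π * ((-k : ℤ) : ℝ) = u - 2 * π * k by push_cast; ring, mul_left_comm,
    ← Complex.exp_add, mul_comm]
  congr 2
  push_cast
  ring

lemma hasSum_fejer_sub (u : ℝ) : HasSum (fun k : ℤ => fejer (u - 2 * π * k)) 1 := by
  have := hasSum_exp_mul_fejer u 0
  simp only [ofReal_zero, mul_zero, zero_mul, Complex.exp_zero, one_mul, zigzag, Int.fract_zero,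
    Int.floor_zero, Int.cast_zero, sub_zero, add_zero] at this
  exact Complex.hasSum_ofReal.mp (by rwa [ofReal_one])

lemma tsum_enorm_fejer_sub (u : ℝ) : ∑' k : ℤ, ‖(fejer (u - 2 * π * k) : ℂ)‖ₑ = 1 := by
  simp_rw [← ofReal_norm, Complex.norm_real, Real.norm_of_nonneg (fejer_nonneg _)]
  rw [← ENNReal.ofReal_tsum_of_nonneg (fun _ => fejer_nonneg _) (hasSum_fejer_sub u).summable,
    (hasSum_fejer_sub u).tsum_eq, ENNReal.ofReal_one]

lemma lintegral_mul_comp_add_eq (p : ℝ) (φ ψ : ℝ → ℝ≥0∞) (k : ℤ) :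
    ∫⁻ y, φ y * ψ (y + p * k) = ∫⁻ u, φ (u - p * k) * ψ u := by
  rw [← lintegral_add_right_eq_self (fun u => φ (u - p * k) * ψ u) (p * k)]
  simp only [add_sub_cancel_right]

lemma tsum_lintegral_mul_comp_add (p : ℝ) {φ ψ : ℝ → ℝ≥0∞} (hφ : AEMeasurable φ)
    (hψ : AEMeasurable ψ) :
    ∑' k : ℤ, ∫⁻ y, φ y * ψ (y + p * k) = ∫⁻ u, (∑' k : ℤ, φ (u - p * k)) * ψ u := by
  simp_rw [tsum_congr (lintegral_mul_comp_add_eq p φ ψ), ← ENNReal.tsum_mul_right]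
  refine (lintegral_tsum fun k => ?_).symm
  exact (hφ.comp_quasiMeasurePreserving
    (measurePreserving_sub_right volume _).quasiMeasurePreserving).mul hψ

lemma integral_mul_tsum_comp_add (p : ℝ) {φ ψ : ℝ → ℂ} (hφ : AEStronglyMeasurable φ)
    (hψ : AEStronglyMeasurable ψ)
    (hfin : ∫⁻ u, (∑' k : ℤ, ‖φ (u - p * k)‖ₑ) * ‖ψ u‖ₑ ≠ ∞) :
    ∫ y, φ y * ∑' k : ℤ, ψ (y + p * k) = ∫ u, (∑' k : ℤ, φ (u - p * k)) * ψ u := by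
  have hshift (k : ℤ) : ∫ y, φ y * ψ (y + p * k) = ∫ u, φ (u - p * k) * ψ u := by
    rw [← integral_add_right_eq_self (fun u => φ (u - p * k) * ψ u) (p * k)]
    simp only [add_sub_cancel_right]
  have hψk (k : ℤ) : AEStronglyMeasurable fun y => ψ (y + p * k) :=
    hψ.comp_quasiMeasurePreserving (measurePreserving_add_right volume _).quasiMeasurePreserving
  have hφk (k : ℤ) : AEStronglyMeasurable fun u => φ (u - p * k) :=
    hφ.comp_quasiMeasurePreserving (measurePreserving_sub_right volume _).quasiMeasurePreserving
  calc ∫ y, φ y * ∑' k : ℤ, ψ (y + p * k)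
      = ∑' k : ℤ, ∫ y, φ y * ψ (y + p * k) := by
        simp_rw [← tsum_mul_left]
        refine integral_tsum (fun k => hφ.mul (hψk k)) ?_
        simpa only [enorm_mul, tsum_lintegral_mul_comp_add p hφ.enorm hψ.enorm] using hfin
    _ = ∑' k : ℤ, ∫ u, φ (u - p * k) * ψ u := tsum_congr hshift
    _ = ∫ u, (∑' k : ℤ, φ (u - p * k)) * ψ u := by
        simp_rw [← tsum_mul_right]
        refine (integral_tsum (fun k => (hφk k).mul hψ) ?_).symm
        simpa only [Pi.mul_apply, enorm_mul,
          ← tsum_congr (lintegral_mul_comp_add_eq p (‖φ ·‖ₑ) (‖ψ ·‖ₑ)),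
          tsum_lintegral_mul_comp_add p hφ.enorm hψ.enorm] using hfin

noncomputable def weightedPeriodization (w : ℝ → ℂ) (p : ℝ) (g : ℝ → ℂ) (y : ℝ) : ℂ :=
  w y * ∑' k : ℤ, g (y + p * k)

section WeightedPeriodization

variable {w g : ℝ → ℂ} {p : ℝ}

lemma lintegral_enorm_weightedPeriodization_le (hw : AEStronglyMeasurable w)
    (hw_one : ∀ u, ∑' k : ℤ, ‖w (u - p * k)‖ₑ ≤ 1) (hg : AEStronglyMeasurable g) :
    ∫⁻ y, ‖weightedPeriodization w p g y‖ₑ ≤ ∫⁻ u, ‖g u‖ₑ := by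
  have hgk (k : ℤ) : AEMeasurable fun y => ‖w y‖ₑ * ‖g (y + p * k)‖ₑ :=
    hw.enorm.mul (hg.enorm.comp_quasiMeasurePreserving
      (measurePreserving_add_right volume _).quasiMeasurePreserving)
  calc ∫⁻ y, ‖weightedPeriodization w p g y‖ₑ
      ≤ ∫⁻ y, ∑' k : ℤ, ‖w y‖ₑ * ‖g (y + p * k)‖ₑ := lintegral_mono fun y => by
        rw [weightedPeriodization, enorm_mul, ENNReal.tsum_mul_left]
        gcongr
        exact enorm_tsum_le_tsum_enorm
    _ = ∫⁻ u, (∑' k : ℤ, ‖w (u - p * k)‖ₑ) * ‖g u‖ₑ := by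
        rw [lintegral_tsum hgk, tsum_lintegral_mul_comp_add p hw.enorm hg.enorm]
    _ ≤ ∫⁻ u, ‖g u‖ₑ := lintegral_mono fun u => mul_le_of_le_one_left' (hw_one u)

lemma integrable_weightedPeriodization (hw : AEStronglyMeasurable w)
    (hw_one : ∀ u, ∑' k : ℤ, ‖w (u - p * k)‖ₑ ≤ 1) (hg : Integrable g) :
    Integrable (weightedPeriodization w p g) := by
  refine ⟨hw.mul (AEMeasurable.tsum fun k => ?_).aestronglyMeasurable,
    (lintegral_enorm_weightedPeriodization_le hw hw_one hg.1).trans_lt hg.2⟩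
  exact hg.1.aemeasurable.comp_quasiMeasurePreserving
    (measurePreserving_add_right volume _).quasiMeasurePreserving

lemma integral_norm_weightedPeriodization_le (hw : AEStronglyMeasurable w)
    (hw_one : ∀ u, ∑' k : ℤ, ‖w (u - p * k)‖ₑ ≤ 1) (hg : Integrable g) :
    ∫ y, ‖weightedPeriodization w p g y‖ ≤ ∫ u, ‖g u‖ := by
  rw [integral_norm_eq_lintegral_enorm (integrable_weightedPeriodization hw hw_one hg).1,
    integral_norm_eq_lintegral_enorm hg.1]
  exact ENNReal.toReal_mono hg.2.ne (lintegral_enorm_weightedPeriodization_le hw hw_one hg.1)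

lemma integral_mul_weightedPeriodization (hw : AEStronglyMeasurable w)
    (hw_one : ∀ u, ∑' k : ℤ, ‖w (u - p * k)‖ₑ ≤ 1) (hg : Integrable g) {χ : ℝ → ℂ}
    (hχ : AEStronglyMeasurable χ) (hχ_le : ∀ y, ‖χ y‖ ≤ 1) :
    ∫ y, χ y * weightedPeriodization w p g y
      = ∫ u, (∑' k : ℤ, χ (u - p * k) * w (u - p * k)) * g u := by
  simp only [weightedPeriodization, ← mul_assoc]
  refine integral_mul_tsum_comp_add p (hχ.mul hw) hg.1 (ne_top_of_le_ne_top hg.2.ne ?_)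
  refine lintegral_mono fun u => mul_le_of_le_one_left' ((ENNReal.tsum_le_tsum fun k => ?_).trans
    (hw_one u))
  rw [enorm_mul, ← ofReal_norm (χ _)]
  exact mul_le_of_le_one_left' (ENNReal.ofReal_le_one.mpr (hχ_le _))

end WeightedPeriodization

lemma norm_exp_I_mul_mul (x y : ℝ) : ‖exp (I * x * y)‖ = 1 := by
  rw [mul_assoc, ← ofReal_mul, norm_exp_I_mul_ofReal]

/-- Theorem 2 for `W₀`: If `f` is the Fourier transform of `g ∈ L¹(ℝ)`
(so `f ∈ W₀(ℝ)`), then the piecewise linear interpolant `ℓ_f` of `f` at the integers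
is the Fourier transform of some `h ∈ L¹(ℝ)` with `‖h‖₁ ≤ ‖g‖₁`, i.e.
`ℓ_f ∈ W₀(ℝ)` with `‖ℓ_f‖_{W₀} ≤ ‖f‖_{W₀}`. -/
theorem zigzag_of_wiener_W0
    (g : ℝ → ℂ) (hg : Integrable g)
    (f : ℝ → ℂ)
    (hf : ∀ x : ℝ, f x = ∫ y : ℝ, Complex.exp (Complex.I * x * y) * g y)
    (ℓ : ℝ → ℂ)
    (hℓ : ∀ x : ℝ, ℓ x = (1 - ((Int.fract x : ℝ) : ℂ)) * f (⌊x⌋ : ℝ)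
      + ((Int.fract x : ℝ) : ℂ) * f ((⌊x⌋ : ℝ) + 1)) :
    ∃ h : ℝ → ℂ, Integrable h ∧
      (∀ x : ℝ, ℓ x = ∫ y : ℝ, Complex.exp (Complex.I * x * y) * h y) ∧
      (∫ y : ℝ, ‖h y‖) ≤ ∫ y : ℝ, ‖g y‖ := by
  have hfejer_meas : AEStronglyMeasurable fun y => (fejer y : ℂ) := by
    unfold fejer; fun_prop
  have hfejer (u : ℝ) : ∑' k : ℤ, ‖(fejer (u - 2 * π * k) : ℂ)‖ₑ ≤ 1 :=
    (tsum_enorm_fejer_sub u).le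
  refine ⟨weightedPeriodization (fun y => fejer y) (2 * π) g,
    integrable_weightedPeriodization hfejer_meas hfejer hg, fun x => ?_,
    integral_norm_weightedPeriodization_le hfejer_meas hfejer hg⟩
  have hexp_int (x : ℝ) : Integrable fun y : ℝ => exp (I * x * y) * g y :=
    hg.bdd_mul (by fun_prop) (.of_forall fun y => (norm_exp_I_mul_mul x y).le)
  rw [integral_mul_weightedPeriodization hfejer_meas hfejer hg (by fun_prop)
    fun y => (norm_exp_I_mul_mul x y).le]
  calc ℓ x = zigzag f x := hℓ x
    _ = ∫ y : ℝ, zigzag (fun x => exp (I * x * y)) x * g y := by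
        rw [funext hf, zigzag_integral hexp_int]
        exact integral_congr_ae (.of_forall fun y => zigzag_mul_const _ _ x)
    _ = _ := by simp_rw [(hasSum_exp_mul_fejer _ x).tsum_eq]
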